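/- arXiv:2103.04149 — 8 statements merged into one kernel-verified Lean document; each statement's English description precedes it below -/
import Mathlib

section
/- For every n ≥ 1, the space of n×n real matrices decomposes as a direct sum ℝ^{n×n} = S_n ⊕ V_n; that is, every n×n real matrix M can be written uniquely as M = S + V with S ∈ S_n and V ∈ V_n. -/
open Matrix Finset

/-- An `n × n` real matrix has the constant sum property (is of type S) if there is a
weight `w` such that every row sum and every column sum equals `n * w`. -/
def IsTypeS {n : ℕ} (M : Matrix (Fin n) (Fin n) ℝ) : Prop :=
  ∃ w : ℝ, (∀ i, ∑ j, M i j = n * w) ∧ (∀ j, ∑ i, M i j = n * w)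

/-- An `n × n` real matrix has the vertex cross sum property (is of type V) if
`M i j + M k l = M i l + M k j` for all indices and all entries sum to zero. -/
def IsTypeV {n : ℕ} (M : Matrix (Fin n) (Fin n) ℝ) : Prop :=
  (∀ i j k l, M i j + M k l = M i l + M k j) ∧ (∑ i, ∑ j, M i j = 0)

/-! A type V matrix is determined by its row sums, column sums and total: summing the cross
identity `A i j + A k l = A i l + A k j` over all `k, l` gives
`n² A i j = n (row i) + n (col j) - total`. Hence a matrix of both types, whose row and column
sums all equal `n w` with `n² w = total = 0`, vanishes, which gives uniqueness. For existence,
take for the type V part the matrix `row i / n + col j / n - 2 total / n²` built from `M`;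
subtracting it leaves every row and column sum equal to `total / n`. -/

theorem Matrix.card_sq_mul_apply_of_cross {ι R : Type*} [Fintype ι] [CommRing R]
    {A : Matrix ι ι R} (hA : ∀ i j k l, A i j + A k l = A i l + A k j) (i j : ι) :
    (Fintype.card ι : R) ^ 2 * A i j
      = Fintype.card ι * ∑ l, A i l + Fintype.card ι * ∑ k, A k j - ∑ k, ∑ l, A k l := by
  have hsum : ∑ k, ∑ l, (A i j + A k l) = ∑ k, ∑ l, (A i l + A k j) := by
    simp only [hA]
  simp only [sum_add_distrib, sum_const, card_univ, nsmul_eq_mul, ← mul_sum] at hsum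
  linear_combination hsum

theorem IsTypeS.sub {n : ℕ} {S S' : Matrix (Fin n) (Fin n) ℝ} (hS : IsTypeS S)
    (hS' : IsTypeS S') : IsTypeS (S - S') := by
  obtain ⟨w, hrow, hcol⟩ := hS
  obtain ⟨w', hrow', hcol'⟩ := hS'
  refine ⟨w - w', fun i => ?_, fun j => ?_⟩ <;>
    simp [Matrix.sub_apply, sum_sub_distrib, hrow, hrow', hcol, hcol', mul_sub]

theorem IsTypeV.sub {n : ℕ} {V V' : Matrix (Fin n) (Fin n) ℝ} (hV : IsTypeV V)
    (hV' : IsTypeV V') : IsTypeV (V - V') := by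
  refine ⟨fun i j k l => ?_, ?_⟩
  · simp only [Matrix.sub_apply]
    linear_combination hV.1 i j k l - hV'.1 i j k l
  · simp [Matrix.sub_apply, sum_sub_distrib, hV.2, hV'.2]

theorem eq_zero_of_isTypeS_of_isTypeV {n : ℕ} (hn : n ≠ 0) {A : Matrix (Fin n) (Fin n) ℝ}
    (hS : IsTypeS A) (hV : IsTypeV A) : A = 0 := by
  obtain ⟨w, hrow, hcol⟩ := hS
  have hn' : (n : ℝ) ≠ 0 := Nat.cast_ne_zero.mpr hn
  have hw : w = 0 := by
    have htotal := hV.2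
    simp only [hrow, sum_const, card_univ, Fintype.card_fin, nsmul_eq_mul] at htotal
    simpa [hn'] using htotal
  ext i j
  have key := card_sq_mul_apply_of_cross hV.1 i j
  simp only [hrow, hcol, hw, Fintype.card_fin, mul_zero, add_zero] at key
  simpa [hn'] using key

theorem IsTypeS.eq_and_eq_of_add_eq_add {n : ℕ} (hn : n ≠ 0)
    {S S' V V' : Matrix (Fin n) (Fin n) ℝ} (hS : IsTypeS S) (hS' : IsTypeS S')
    (hV : IsTypeV V) (hV' : IsTypeV V') (h : S + V = S' + V') : S = S' ∧ V = V' := by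
  have hdiff : S - S' = V' - V := by rw [sub_eq_sub_iff_add_eq_add, h, add_comm]
  have hzero : S - S' = 0 :=
    eq_zero_of_isTypeS_of_isTypeV hn (hS.sub hS') (hdiff ▸ hV'.sub hV)
  exact ⟨sub_eq_zero.mp hzero, (sub_eq_zero.mp (hdiff ▸ hzero)).symm⟩

noncomputable def vComponent {n : ℕ} (M : Matrix (Fin n) (Fin n) ℝ) : Matrix (Fin n) (Fin n) ℝ :=
  of fun i j => (∑ l, M i l) / n + (∑ k, M k j) / n - 2 * (∑ k, ∑ l, M k l) / n ^ 2

theorem sum_vComponent_row {n : ℕ} (hn : n ≠ 0) (M : Matrix (Fin n) (Fin n) ℝ) (i : Fin n) :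
    ∑ j, vComponent M i j = ∑ j, M i j - (∑ k, ∑ l, M k l) / n := by
  have hn' : (n : ℝ) ≠ 0 := Nat.cast_ne_zero.mpr hn
  simp only [vComponent, of_apply, sum_sub_distrib, sum_add_distrib, ← sum_div, sum_const,
    card_univ, Fintype.card_fin, nsmul_eq_mul, sum_comm (γ := Fin n) (f := fun j k => M k j)]
  field_simp
  ring

theorem sum_vComponent_col {n : ℕ} (hn : n ≠ 0) (M : Matrix (Fin n) (Fin n) ℝ) (j : Fin n) :
    ∑ i, vComponent M i j = ∑ i, M i j - (∑ k, ∑ l, M k l) / n := by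
  have hn' : (n : ℝ) ≠ 0 := Nat.cast_ne_zero.mpr hn
  simp only [vComponent, of_apply, sum_sub_distrib, sum_add_distrib, ← sum_div, sum_const,
    card_univ, Fintype.card_fin, nsmul_eq_mul]
  field_simp
  ring

theorem isTypeV_vComponent {n : ℕ} (hn : n ≠ 0) (M : Matrix (Fin n) (Fin n) ℝ) :
    IsTypeV (vComponent M) := by
  refine ⟨fun i j k l => ?_, ?_⟩
  · simp only [vComponent, of_apply]
    ring
  · simp only [sum_vComponent_row hn, sum_sub_distrib, sum_const, card_univ, Fintype.card_fin,
      nsmul_eq_mul]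
    field_simp [Nat.cast_ne_zero.mpr hn]
    ring

theorem isTypeS_sub_vComponent {n : ℕ} (hn : n ≠ 0) (M : Matrix (Fin n) (Fin n) ℝ) :
    IsTypeS (M - vComponent M) := by
  have hn' : (n : ℝ) ≠ 0 := Nat.cast_ne_zero.mpr hn
  refine ⟨(∑ k, ∑ l, M k l) / n ^ 2, fun i => ?_, fun j => ?_⟩
  · rw [show ∑ j, (M - vComponent M) i j = ∑ j, M i j - ∑ j, vComponent M i j by
      simp [sum_sub_distrib], sum_vComponent_row hn]
    field_simp
    ring
  · rw [show ∑ i, (M - vComponent M) i j = ∑ i, M i j - ∑ i, vComponent M i j by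
      simp [sum_sub_distrib], sum_vComponent_col hn]
    field_simp
    ring

/-- `ℝ^{n×n} = S_n ⊕ V_n`: every square real matrix decomposes uniquely as the sum of a
type S matrix and a type V matrix. -/
theorem sv_direct_sum_decomposition (n : ℕ) (hn : 1 ≤ n)
    (M : Matrix (Fin n) (Fin n) ℝ) :
    ∃! SV : Matrix (Fin n) (Fin n) ℝ × Matrix (Fin n) (Fin n) ℝ,
      IsTypeS SV.1 ∧ IsTypeV SV.2 ∧ M = SV.1 + SV.2 := by
  have hn0 : n ≠ 0 := by omega
  refine ⟨(M - vComponent M, vComponent M),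
    ⟨isTypeS_sub_vComponent hn0 M, isTypeV_vComponent hn0 M, (sub_add_cancel _ _).symm⟩, ?_⟩
  rintro ⟨S, V⟩ ⟨hS, hV, hM⟩
  obtain ⟨hS_eq, hV_eq⟩ := IsTypeS.eq_and_eq_of_add_eq_add hn0
    hS (isTypeS_sub_vComponent hn0 M) hV (isTypeV_vComponent hn0 M)
    (by rw [← hM, sub_add_cancel])
  exact Prod.ext hS_eq hV_eq
end

section
/- If S ∈ S_n and V ∈ V_n, then both products SV and VS lie in V_n. -/
open Matrix Finset

namespace Matrix

variable {ι κ μ R : Type*} [Fintype κ] [CommRing R]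

def HasVertexCrossSum (M : Matrix ι μ R) : Prop :=
  ∀ i j k l, M i j + M k l = M i l + M k j

theorem HasVertexCrossSum.transpose {M : Matrix ι μ R} (hM : M.HasVertexCrossSum) :
    Mᵀ.HasVertexCrossSum := fun i j k l => by
  simpa [add_comm] using hM j i l k

theorem HasVertexCrossSum.sub_eq_sub {M : Matrix ι μ R} (hM : M.HasVertexCrossSum)
    (i k : ι) (j l : μ) : M i j - M i l = M k j - M k l := by
  linear_combination hM i j k l

theorem HasVertexCrossSum.mul_left {A : Matrix ι κ R} {B : Matrix κ μ R} {c : R}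
    (hA : ∀ i, ∑ m, A i m = c) (hB : B.HasVertexCrossSum) : (A * B).HasVertexCrossSum := by
  intro i j k l
  rcases isEmpty_or_nonempty κ with _ | ⟨⟨m₀⟩⟩
  · simp [mul_apply]
  -- `B m j - B m l` does not depend on `m`, and the row sums of `A` cancel.
  have cross_defect : ∑ m, (A i m - A k m) * (B m j - B m l) = 0 := by
    simp_rw [hB.sub_eq_sub _ m₀, ← sum_mul, sum_sub_distrib, hA, sub_self, zero_mul]
  rw [← sub_eq_zero, ← cross_defect]
  simp only [mul_apply]
  rw [← sum_add_distrib, ← sum_add_distrib, ← sum_sub_distrib]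
  exact sum_congr rfl fun m _ => by ring

variable [Fintype ι] [Fintype μ]

theorem sum_sum_mul_apply_of_col_sum {A : Matrix ι κ R} {c : R} (hA : ∀ m, ∑ i, A i m = c)
    (B : Matrix κ μ R) : ∑ i, ∑ j, (A * B) i j = c * ∑ m, ∑ j, B m j :=
  calc ∑ i, ∑ j, (A * B) i j = ∑ m, (∑ i, A i m) * ∑ j, B m j := by
        simp only [mul_apply, sum_mul_sum]
        exact (sum_congr rfl fun i _ => sum_comm).trans sum_comm
    _ = c * ∑ m, ∑ j, B m j := by simp only [hA, mul_sum]

end Matrix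

theorem IsTypeS.transpose {n : ℕ} {S : Matrix (Fin n) (Fin n) ℝ} (hS : IsTypeS S) :
    IsTypeS Sᵀ :=
  hS.imp fun _ => And.symm

theorem IsTypeV.transpose {n : ℕ} {V : Matrix (Fin n) (Fin n) ℝ} (hV : IsTypeV V) :
    IsTypeV Vᵀ :=
  ⟨HasVertexCrossSum.transpose hV.1, by simpa [sum_comm (γ := Fin n)] using hV.2⟩

theorem IsTypeV.typeS_mul {n : ℕ} {S V : Matrix (Fin n) (Fin n) ℝ} (hS : IsTypeS S)
    (hV : IsTypeV V) : IsTypeV (S * V) := by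
  obtain ⟨w, hrow, hcol⟩ := hS
  refine ⟨HasVertexCrossSum.mul_left hrow hV.1, ?_⟩
  rw [sum_sum_mul_apply_of_col_sum hcol, hV.2, mul_zero]

/-- If `S ∈ S_n` and `V ∈ V_n`, then both `S * V` and `V * S` lie in `V_n`. -/
theorem typeS_mul_typeV {n : ℕ} (S V : Matrix (Fin n) (Fin n) ℝ)
    (hS : IsTypeS S) (hV : IsTypeV V) : IsTypeV (S * V) ∧ IsTypeV (V * S) := by
  refine ⟨hV.typeS_mul hS, ?_⟩
  simpa only [transpose_mul, transpose_transpose] using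
    (hV.transpose.typeS_mul hS.transpose).transpose
end

section
/- An n×n real matrix M is an element of V_n if and only if there exist vectors a, b ∈ ℝ^n, each orthogonal to the all-ones vector 1_n, such that M = a·1_n^T + 1_n·b^T. -/
open Matrix Finset

namespace Matrix

variable {m n R : Type*}

theorem card_mul_card_smul_add_sum_eq_of_cross [Fintype m] [Fintype n] [AddCommMonoid R]
    {M : Matrix m n R} (hcross : ∀ i j k l, M i j + M k l = M i l + M k j) (i : m) (j : n) :
    (Fintype.card m * Fintype.card n) • M i j + ∑ k, ∑ l, M k l =
      Fintype.card m • ∑ l, M i l + Fintype.card n • ∑ k, M k j := by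
  have hsum := sum_congr rfl fun k (_ : k ∈ univ) =>
    sum_congr rfl fun l (_ : l ∈ univ) => hcross i j k l
  simpa only [sum_add_distrib, sum_const, card_univ, smul_sum, mul_smul] using hsum

theorem eq_vecMulVec_add_vecMulVec_of_cross [Fintype m] [Fintype n] {K : Type*} [Field K]
    [CharZero K] {M : Matrix m n K} (hcross : ∀ i j k l, M i j + M k l = M i l + M k j)
    (hzero : ∑ i, ∑ j, M i j = 0) :
    M = vecMulVec (fun i => (∑ l, M i l) / Fintype.card n) (fun _ => 1) +
      vecMulVec (fun _ => 1) (fun j => (∑ k, M k j) / Fintype.card m) := by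
  ext i j
  have : Nonempty m := ⟨i⟩
  have : Nonempty n := ⟨j⟩
  have hm : (Fintype.card m : K) ≠ 0 := Nat.cast_ne_zero.mpr Fintype.card_ne_zero
  have hn : (Fintype.card n : K) ≠ 0 := Nat.cast_ne_zero.mpr Fintype.card_ne_zero
  have key := card_mul_card_smul_add_sum_eq_of_cross hcross i j
  simp only [hzero, add_zero, nsmul_eq_mul, Nat.cast_mul] at key
  simp only [add_apply, vecMulVec_apply, mul_one, one_mul]
  field_simp
  linear_combination key

theorem cross_of_eq_vecMulVec_add_vecMulVec [NonAssocSemiring R] {M : Matrix m n R}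
    {a : m → R} {b : n → R} (hM : M = vecMulVec a (fun _ => 1) + vecMulVec (fun _ => 1) b)
    (i : m) (j : n) (k : m) (l : n) : M i j + M k l = M i l + M k j := by
  simp only [hM, add_apply, vecMulVec_apply, mul_one, one_mul]
  abel

theorem sum_sum_eq_of_eq_vecMulVec_add_vecMulVec [Fintype m] [Fintype n] [NonAssocSemiring R]
    {M : Matrix m n R} {a : m → R} {b : n → R}
    (hM : M = vecMulVec a (fun _ => 1) + vecMulVec (fun _ => 1) b) :
    ∑ i, ∑ j, M i j = Fintype.card n • ∑ i, a i + Fintype.card m • ∑ j, b j := by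
  simp only [hM, add_apply, vecMulVec_apply, mul_one, one_mul, sum_add_distrib, sum_const,
    card_univ, smul_sum]

end Matrix

/-- `M ∈ V_n` if and only if `M = a 1ₙᵀ + 1ₙ bᵀ` for some vectors `a, b` orthogonal to
the all-ones vector. -/
theorem typeV_iff_rank_one_sum {n : ℕ} (M : Matrix (Fin n) (Fin n) ℝ) :
    IsTypeV M ↔ ∃ a b : Fin n → ℝ, (∑ i, a i = 0) ∧ (∑ i, b i = 0) ∧
      M = vecMulVec a (fun _ => 1) + vecMulVec (fun _ => 1) b := by
  constructor
  · rintro ⟨hcross, hzero⟩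
    refine ⟨_, _, ?_, ?_, eq_vecMulVec_add_vecMulVec_of_cross hcross hzero⟩
    · rw [← sum_div, hzero, zero_div]
    · rw [← sum_div, sum_comm, hzero, zero_div]
  · rintro ⟨a, b, ha, hb, hM⟩
    refine ⟨cross_of_eq_vecMulVec_add_vecMulVec hM, ?_⟩
    rw [sum_sum_eq_of_eq_vecMulVec_add_vecMulVec hM, ha, hb, smul_zero, add_zero]
end

section
/- The decomposition ℝ^{n×n} = S_n ⊕ V_n is orthogonal with respect to the Frobenius inner product: for every S ∈ S_n and V ∈ V_n, one has tr(S^T V) = 0. -/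
open Matrix Finset

/-! Writing `V i j = a i + b j`, the Frobenius product `∑ S i j V i j` only sees the row and
column sums of `S`, all equal to `n w`; so it is `n w (∑ a + ∑ b) = w ∑ V i j = 0`. -/

section CrossSum

variable {m n R : Type*}

theorem exists_eq_add_of_cross_sum [AddCommGroup R] {M : Matrix m n R}
    (h : ∀ i j k l, M i j + M k l = M i l + M k j) :
    ∃ (a : m → R) (b : n → R), ∀ i j, M i j = a i + b j := by
  rcases isEmpty_or_nonempty m with _ | ⟨⟨i₀⟩⟩
  · exact ⟨0, 0, fun i => isEmptyElim i⟩
  rcases isEmpty_or_nonempty n with _ | ⟨⟨j₀⟩⟩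
  · exact ⟨0, 0, fun _ j => isEmptyElim j⟩
  refine ⟨fun i => M i j₀, fun j => M i₀ j - M i₀ j₀, fun i j => ?_⟩
  beta_reduce
  rw [← add_sub_assoc, ← h i j i₀ j₀, add_sub_cancel_right]

variable [Fintype m] [Fintype n]

theorem sum_sum_add [AddCommMonoid R] (a : m → R) (b : n → R) :
    ∑ i, ∑ j, (a i + b j) = Fintype.card n • ∑ i, a i + Fintype.card m • ∑ j, b j := by
  simp only [sum_add_distrib, sum_const, card_univ, ← smul_sum, sum_comm (γ := m)]

theorem sum_sum_mul_add_of_sum_eq [NonUnitalNonAssocCommSemiring R] {S : Matrix m n R}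
    {r c : R} (hrow : ∀ i, ∑ j, S i j = r) (hcol : ∀ j, ∑ i, S i j = c)
    (a : m → R) (b : n → R) :
    ∑ i, ∑ j, S i j * (a i + b j) = r * ∑ i, a i + c * ∑ j, b j := by
  simp only [mul_add, sum_add_distrib, ← sum_mul, hrow, sum_comm (γ := m), hcol, mul_comm r,
    mul_comm c]

theorem trace_transpose_mul_eq_sum_sum [CommSemiring R] (S V : Matrix m n R) :
    (Sᵀ * V).trace = ∑ i, ∑ j, S i j * V i j := by
  rw [trace_mul_comm, ← sum_hadamard_eq]
  simp only [hadamard_apply, mul_comm]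

end CrossSum

/-- The decomposition `ℝ^{n×n} = S_n ⊕ V_n` is orthogonal with respect to the Frobenius
inner product: `tr(Sᵀ V) = 0` for `S ∈ S_n`, `V ∈ V_n`. -/
theorem frobenius_orthogonal {n : ℕ} (S V : Matrix (Fin n) (Fin n) ℝ)
    (hS : IsTypeS S) (hV : IsTypeV V) : (Sᵀ * V).trace = 0 := by
  obtain ⟨w, hrow, hcol⟩ := hS
  obtain ⟨hcross, hsum⟩ := hV
  obtain ⟨a, b, hab⟩ := exists_eq_add_of_cross_sum hcross
  simp only [hab, sum_sum_add, Fintype.card_fin, nsmul_eq_mul] at hsum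
  rw [trace_transpose_mul_eq_sum_sum]
  simp only [hab, sum_sum_mul_add_of_sum_eq hrow hcol]
  linear_combination w * hsum
end

section
/- Let M, N be n×n real matrices with decompositions M = M_V + M_0 + (wt M)·E_n and N = N_V + N_0 + (wt N)·E_n, where N_V = a·1_n^T + 1_n·b^T with a, b orthogonal to 1_n. If M = N^T N, then: (1) wt M = |a|² + n·(wt N)²; (2) M_V = y·1_n^T + 1_n·y^T where y = N_0^T a + n·(wt N)·b; and (3) M_0 = N_0^T N_0 + n·b·b^T. -/
/-!
Substituting `N = a 1ᵀ + 1 bᵀ + N₀ + w E` into `Nᵀ N`, every cross term carrying `1ᵀ a` or a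
column sum of `N₀` vanishes, leaving
`Nᵀ N = (|a|² + n w²) E + (y 1ᵀ + 1 yᵀ) + (N₀ᵀ N₀ + n b bᵀ)` with `y = N₀ᵀ a + n w b`.
This is again a splitting of `M` into a matrix with the cross-sum property `m i j + m k l =
m i l + m k j` and a matrix with vanishing row and column sums, and such a splitting is unique:
a matrix with both properties is zero, because summing the cross identity over `k, l` gives
`n² m i j = 0`. Comparing total sums identifies the weight.
-/

open Matrix Finset

/-- The weight of a matrix: the mean of all its entries. -/
noncomputable def wt {n : ℕ} (M : Matrix (Fin n) (Fin n) ℝ) : ℝ :=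
  (1 / (n : ℝ) ^ 2) * ∑ i, ∑ j, M i j

/-- The all-ones `n × n` matrix `E_n = 1ₙ 1ₙᵀ`. -/
def En (n : ℕ) : Matrix (Fin n) (Fin n) ℝ := Matrix.of fun _ _ => 1

section CrossSums

variable {ι κ R : Type*}

/-- The cross-sum condition of type V matrices; it holds exactly for the matrices
`u i + v j`, i.e. for `M_V + w • E_n`. -/
def HasCrossSums [Add R] (M : Matrix ι κ R) : Prop :=
  ∀ i j k l, M i j + M k l = M i l + M k j

def HasZeroLineSums [Fintype ι] [Fintype κ] [AddCommMonoid R] (M : Matrix ι κ R) : Prop :=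
  (∀ i, ∑ j, M i j = 0) ∧ ∀ j, ∑ i, M i j = 0

theorem hasCrossSums_of_apply_eq_add [AddCommSemigroup R] {M : Matrix ι κ R} (u : ι → R)
    (v : κ → R) (h : ∀ i j, M i j = u i + v j) : HasCrossSums M := by
  intro i j k l
  simp only [h]
  ac_rfl

theorem hasCrossSums_vecMulVec_add_vecMulVec [NonAssocSemiring R] (u : ι → R) (v : κ → R) :
    HasCrossSums (vecMulVec u (fun _ => 1) + vecMulVec (fun _ => 1) v) :=
  hasCrossSums_of_apply_eq_add u v fun i j => by simp [vecMulVec_apply]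

theorem HasCrossSums.add [AddCommSemigroup R] {M N : Matrix ι κ R} (hM : HasCrossSums M)
    (hN : HasCrossSums N) : HasCrossSums (M + N) := by
  intro i j k l
  simp only [Matrix.add_apply]
  rw [add_add_add_comm, hM, hN, add_add_add_comm]

theorem HasCrossSums.sub [AddCommGroup R] {M N : Matrix ι κ R} (hM : HasCrossSums M)
    (hN : HasCrossSums N) : HasCrossSums (M - N) := by
  intro i j k l
  simp only [Matrix.sub_apply]
  rw [sub_add_sub_comm, hM, hN, sub_add_sub_comm]

variable [Fintype ι] [Fintype κ]

theorem HasZeroLineSums.add [AddCommMonoid R] {M N : Matrix ι κ R} (hM : HasZeroLineSums M)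
    (hN : HasZeroLineSums N) : HasZeroLineSums (M + N) :=
  ⟨fun i => by simp [sum_add_distrib, hM.1 i, hN.1 i],
    fun j => by simp [sum_add_distrib, hM.2 j, hN.2 j]⟩

theorem HasZeroLineSums.sub [AddCommGroup R] {M N : Matrix ι κ R} (hM : HasZeroLineSums M)
    (hN : HasZeroLineSums N) : HasZeroLineSums (M - N) :=
  ⟨fun i => by simp [sum_sub_distrib, hM.1 i, hN.1 i],
    fun j => by simp [sum_sub_distrib, hM.2 j, hN.2 j]⟩

theorem HasZeroLineSums.smul {S : Type*} [AddCommMonoid R] [DistribSMul S R]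
    {M : Matrix ι κ R} (hM : HasZeroLineSums M) (c : S) : HasZeroLineSums (c • M) :=
  ⟨fun i => by simp [← smul_sum, hM.1 i], fun j => by simp [← smul_sum, hM.2 j]⟩

theorem HasCrossSums.eq_zero [AddCommGroup R] [IsAddTorsionFree R] {D : Matrix ι κ R}
    (hD : HasCrossSums D) (h0 : HasZeroLineSums D) : D = 0 := by
  ext i j
  have key : ∑ k, ∑ l, (D i j + D k l) = ∑ k, ∑ l, (D i l + D k j) :=
    sum_congr rfl fun k _ => sum_congr rfl fun l _ => hD i j k l
  simp only [sum_add_distrib, sum_const, card_univ, h0.1, h0.2, ← smul_sum, smul_zero,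
    add_zero, smul_smul] at key
  have : Nonempty ι := ⟨i⟩
  have : Nonempty κ := ⟨j⟩
  exact (nsmul_eq_zero_iff_right (mul_ne_zero Fintype.card_ne_zero Fintype.card_ne_zero)).1 key

theorem HasCrossSums.eq_of_add_eq_add [AddCommGroup R] [IsAddTorsionFree R]
    {V V' S S' : Matrix ι κ R} (hV : HasCrossSums V) (hV' : HasCrossSums V')
    (hS : HasZeroLineSums S) (hS' : HasZeroLineSums S') (h : V + S = V' + S') :
    V = V' ∧ S = S' := by
  have hD : V - V' = S' - S := by
    rw [sub_eq_sub_iff_add_eq_add, h, add_comm]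
  have hzero : V - V' = 0 := (hV.sub hV').eq_zero (hD ▸ hS'.sub hS)
  exact ⟨sub_eq_zero.1 hzero, (sub_eq_zero.1 (hD ▸ hzero)).symm⟩

end CrossSums

section ZeroLineSums

variable {ι κ m R : Type*} [Fintype ι] [Fintype κ] [Fintype m] [NonUnitalNonAssocSemiring R]

theorem sum_transpose_mulVec_eq_zero {A : Matrix m ι R} (hA : ∀ k, ∑ i, A k i = 0)
    (v : m → R) : ∑ i, (Aᵀ *ᵥ v) i = 0 := by
  simp only [mulVec, dotProduct, transpose_apply]
  rw [sum_comm]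
  simp [← sum_mul, hA]

theorem hasZeroLineSums_transpose_mul {A : Matrix m ι R} {B : Matrix m κ R}
    (hA : ∀ k, ∑ i, A k i = 0) (hB : ∀ k, ∑ j, B k j = 0) : HasZeroLineSums (Aᵀ * B) := by
  refine ⟨fun i => ?_, fun j => ?_⟩ <;>
    simp only [mul_apply, transpose_apply] <;> rw [sum_comm]
  · simp [← mul_sum, hB]
  · simp [← sum_mul, hA]

theorem hasZeroLineSums_vecMulVec {u : ι → R} {v : κ → R} (hu : ∑ i, u i = 0)
    (hv : ∑ j, v j = 0) : HasZeroLineSums (vecMulVec u v) :=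
  ⟨fun i => by simp [vecMulVec_apply, ← mul_sum, hv],
    fun j => by simp [vecMulVec_apply, ← sum_mul, hu]⟩

end ZeroLineSums

theorem transpose_mul_self_eq_of_decomposition {ι R : Type*} [Fintype ι] [CommRing R]
    {N N0 : Matrix ι ι R} {a b : ι → R} {w : R}
    (ha : ∑ i, a i = 0) (hN0 : ∀ j, ∑ i, N0 i j = 0)
    (hN : N = vecMulVec a (fun _ => 1) + vecMulVec (fun _ => 1) b + N0 + w • of fun _ _ => 1) :
    let y := N0ᵀ *ᵥ a + ((Fintype.card ι : R) * w) • b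
    Nᵀ * N = ((∑ i, a i ^ 2) + Fintype.card ι * w ^ 2) • (of fun _ _ => 1) +
      (vecMulVec y (fun _ => 1) + vecMulVec (fun _ => 1) y) +
      (N0ᵀ * N0 + (Fintype.card ι : R) • vecMulVec b b) := by
  subst hN
  ext i j
  have expand : ∀ k, (a k + b i + N0 k i + w) * (a k + b j + N0 k j + w) =
      a k ^ 2 + N0 k i * a k + N0 k j * a k + N0 k i * N0 k j + a k * (b i + b j + 2 * w) +
        N0 k i * (b j + w) + N0 k j * (b i + w) + (b i * b j + w ^ 2 + w * b i + w * b j) :=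
    fun k => by ring
  simp only [mul_apply, transpose_apply, Matrix.add_apply, Matrix.smul_apply, vecMulVec_apply,
    of_apply, mulVec, dotProduct, Pi.add_apply, Pi.smul_apply, smul_eq_mul, mul_one, one_mul,
    expand, sum_add_distrib, ← sum_mul, ha, hN0, sum_const, card_univ, nsmul_eq_mul]
  ring

section Weight

variable {n : ℕ}

theorem IsTypeV.hasCrossSums {M : Matrix (Fin n) (Fin n) ℝ} (hM : IsTypeV M) :
    HasCrossSums M :=
  hM.1

theorem IsTypeS.hasZeroLineSums {M : Matrix (Fin n) (Fin n) ℝ} (hM : IsTypeS M)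
    (hw : wt M = 0) : HasZeroLineSums M := by
  obtain ⟨w, hrow, hcol⟩ := hM
  obtain rfl | hn := n.eq_zero_or_pos
  · exact ⟨finZeroElim, finZeroElim⟩
  have hwt : wt M = w := by
    simp only [wt, hrow, sum_const, card_univ, Fintype.card_fin, nsmul_eq_mul]
    field_simp
  subst hwt
  exact ⟨fun i => by rw [hrow, hw, mul_zero], fun j => by rw [hcol, hw, mul_zero]⟩

theorem hasCrossSums_smul_En (c : ℝ) : HasCrossSums (c • En n) :=
  hasCrossSums_of_apply_eq_add (fun _ => c) 0 fun i j => by simp [En]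

theorem wt_smul_En_add_vecMulVec_add [NeZero n] (c : ℝ) {u v : Fin n → ℝ}
    (hu : ∑ i, u i = 0) (hv : ∑ i, v i = 0) {S : Matrix (Fin n) (Fin n) ℝ}
    (hS : HasZeroLineSums S) :
    wt (c • En n + (vecMulVec u (fun _ => 1) + vecMulVec (fun _ => 1) v) + S) = c := by
  have hn : (n : ℝ) ≠ 0 := Nat.cast_ne_zero.2 (NeZero.ne n)
  simp only [wt, one_div, En, smul_of, Matrix.add_apply, of_apply, Pi.smul_apply, smul_eq_mul,
    mul_one, vecMulVec_apply, one_mul, sum_add_distrib, sum_const, card_univ, Fintype.card_fin,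
    nsmul_eq_mul, hv, add_zero, hS.1, ← mul_sum, hu, mul_zero]
  field_simp

end Weight

/-- If `M = Nᵀ N`, then in terms of the S+V decompositions of `M` and `N` (with
`N_V = a 1ₙᵀ + 1ₙ bᵀ`):
(1) `wt M = |a|² + n (wt N)²`;
(2) `M_V = y 1ₙᵀ + 1ₙ yᵀ` with `y = N₀ᵀ a + n (wt N) b`;
(3) `M₀ = N₀ᵀ N₀ + n b bᵀ`. -/
theorem weights_of_transpose_factorisation {n : ℕ}
    (M N MV M0 N0 : Matrix (Fin n) (Fin n) ℝ) (a b : Fin n → ℝ)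
    (ha : ∑ i, a i = 0) (hb : ∑ i, b i = 0)
    (hMV : IsTypeV MV) (hM0 : IsTypeS M0) (hM0w : wt M0 = 0)
    (hMdec : M = MV + M0 + wt M • En n)
    (hN0 : IsTypeS N0) (hN0w : wt N0 = 0)
    (hNdec : N = vecMulVec a (fun _ => 1) + vecMulVec (fun _ => 1) b + N0 +
      wt N • En n)
    (hfact : M = Nᵀ * N) :
    wt M = (∑ i, a i ^ 2) + n * wt N ^ 2 ∧
    (MV = vecMulVec (N0ᵀ *ᵥ a + ((n : ℝ) * wt N) • b) (fun _ => 1) +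
          vecMulVec (fun _ => 1) (N0ᵀ *ᵥ a + ((n : ℝ) * wt N) • b)) ∧
    M0 = N0ᵀ * N0 + (n : ℝ) • vecMulVec b b := by
  have hN0 := hN0.hasZeroLineSums hN0w
  set c := (∑ i, a i ^ 2) + n * wt N ^ 2
  set y := N0ᵀ *ᵥ a + ((n : ℝ) * wt N) • b
  set Y := vecMulVec y (fun _ => 1) + vecMulVec (fun _ => 1) y
  set Q := N0ᵀ * N0 + (n : ℝ) • vecMulVec b b
  have hM : M = c • En n + Y + Q := by
    rw [hfact, transpose_mul_self_eq_of_decomposition ha hN0.2 hNdec, Fintype.card_fin]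
    rfl
  have hy : ∑ i, y i = 0 := by
    simp [y, sum_add_distrib, ← mul_sum, sum_transpose_mulVec_eq_zero hN0.1, hb]
  have hQ : HasZeroLineSums Q :=
    (hasZeroLineSums_transpose_mul hN0.1 hN0.1).add ((hasZeroLineSums_vecMulVec hb hb).smul _)
  have hwt : wt M = c := by
    obtain rfl | hn := n.eq_zero_or_pos
    · simp [wt, c]
    have := NeZero.of_pos hn
    rw [hM]
    exact wt_smul_En_add_vecMulVec_add c hy hy hQ
  obtain ⟨hV, hS⟩ := HasCrossSums.eq_of_add_eq_add
    (hMV.hasCrossSums.add (hasCrossSums_smul_En (wt M)))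
    ((hasCrossSums_smul_En c).add (hasCrossSums_vecMulVec_add_vecMulVec y y))
    (hM0.hasZeroLineSums hM0w) hQ (by rw [add_right_comm, ← hMdec, hM])
  exact ⟨hwt, by rwa [hwt, add_comm, add_left_cancel_iff] at hV, hS⟩
end

section
/- Let M, N be n×n real matrices with decompositions M = M_V + M_0 + (wt M)·E_n and N = N_V + N_0 + (wt N)·E_n, where N_V = a·1_n^T + 1_n·b^T with a, b orthogonal to 1_n. If M = N², then: (1) wt M = b^T a + n·(wt N)²; (2) M_V = y·1_n^T + 1_n·z^T where y = N_0 a + n·(wt N)·a and z = N_0^T b + n·(wt N)·b; and (3) M_0 = N_0² + n·a·b^T. -/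
open Matrix Finset

/-! With `𝟙` the all-ones vector, expanding `(a 𝟙ᵀ + 𝟙 bᵀ + N₀ + w E)²` using
`𝟙ᵀ a = bᵀ 𝟙 = 0` and `N₀ 𝟙 = 𝟙ᵀ N₀ = 0` leaves
`y 𝟙ᵀ + 𝟙 zᵀ + (N₀² + n a bᵀ) + (bᵀ a + n w²) E`, which is again a sum of a type V matrix,
a type S matrix of weight zero and a multiple of `E`. Such a decomposition is unique: the total
sum fixes the multiple of `E`, and then the line sums fix the type V part, because summing the
cross identity `V i j + V k l = V i l + V k j` over `k, l` expresses `V` through its line sums. -/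

section TypeDecomposition

variable {n : ℕ}

theorem En_eq_vecMulVec_one (n : ℕ) : En n = vecMulVec 1 1 := by
  ext; simp [En, vecMulVec_apply]

theorem IsTypeS.line_sums_eq_zero {A : Matrix (Fin n) (Fin n) ℝ} (hA : IsTypeS A)
    (hw : wt A = 0) : A *ᵥ 1 = 0 ∧ 1 ᵥ* A = 0 := by
  rcases eq_or_ne n 0 with rfl | hn
  · exact ⟨Subsingleton.elim _ _, Subsingleton.elim _ _⟩
  obtain ⟨w, hrow, hcol⟩ := hA
  have hwt : wt A = w := by
    simp only [wt, hrow, sum_const, card_univ, Fintype.card_fin, nsmul_eq_mul]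
    field_simp
  obtain rfl : w = 0 := hwt ▸ hw
  exact ⟨funext fun i => by simpa [mulVec, dotProduct] using hrow i,
    funext fun j => by simpa [vecMul, dotProduct] using hcol j⟩

theorem IsTypeV.one_dotProduct_mulVec_one {V : Matrix (Fin n) (Fin n) ℝ} (hV : IsTypeV V) :
    1 ⬝ᵥ (V *ᵥ 1) = 0 := by
  simpa [mulVec, dotProduct] using hV.2

theorem IsTypeV.sq_smul_eq {V : Matrix (Fin n) (Fin n) ℝ} (hV : IsTypeV V) :
    ((n : ℝ) ^ 2) • V = (n : ℝ) • (vecMulVec (V *ᵥ 1) 1 + vecMulVec 1 (1 ᵥ* V)) := by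
  ext i j
  have hcross : ∑ k, ∑ l, (V i j + V k l) = ∑ k, ∑ l, (V i l + V k j) :=
    sum_congr rfl fun k _ => sum_congr rfl fun l _ => hV.1 i j k l
  simp only [sum_add_distrib, sum_const, card_univ, Fintype.card_fin, nsmul_eq_mul,
    hV.2, ← mul_sum] at hcross
  simp only [Matrix.smul_apply, Matrix.add_apply, vecMulVec_apply, mulVec, vecMul, dotProduct,
    mul_one, one_mul, Pi.one_apply, smul_eq_mul]
  linear_combination hcross

theorem IsTypeV.eq_of_line_sums_eq (hn : n ≠ 0) {V V' : Matrix (Fin n) (Fin n) ℝ}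
    (hV : IsTypeV V) (hV' : IsTypeV V') (hrow : V *ᵥ 1 = V' *ᵥ 1) (hcol : 1 ᵥ* V = 1 ᵥ* V') :
    V = V' := by
  have h := hV.sq_smul_eq
  rw [hrow, hcol, ← hV'.sq_smul_eq] at h
  exact smul_right_injective _ (pow_ne_zero 2 (Nat.cast_ne_zero.mpr hn)) h

theorem isTypeV_vecMulVec_add {y z : Fin n → ℝ} (hy : 1 ⬝ᵥ y = 0) (hz : 1 ⬝ᵥ z = 0) :
    IsTypeV (vecMulVec y 1 + vecMulVec 1 z) := by
  rw [one_dotProduct] at hy hz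
  refine ⟨fun i j k l => ?_, by simp [sum_add_distrib, ← mul_sum, hy, hz]⟩
  simp only [Matrix.add_apply, vecMulVec_apply, Pi.one_apply, mul_one, one_mul]
  ring

theorem typeV_add_add_smul_En_injective (hn : n ≠ 0) {V V' S S' : Matrix (Fin n) (Fin n) ℝ}
    {c c' : ℝ} (hV : IsTypeV V) (hV' : IsTypeV V') (hS : S *ᵥ 1 = 0 ∧ 1 ᵥ* S = 0)
    (hS' : S' *ᵥ 1 = 0 ∧ 1 ᵥ* S' = 0) (h : V + S + c • En n = V' + S' + c' • En n) :
    c = c' ∧ V = V' ∧ S = S' := by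
  have hrow := congrArg (· *ᵥ 1) h
  have hcol := congrArg (1 ᵥ* ·) h
  simp only [add_mulVec, vecMul_add, smul_mulVec, vecMul_smul, hS.1, hS.2, hS'.1, hS'.2,
    add_zero, En_eq_vecMulVec_one, vecMulVec_mulVec, vecMul_vecMulVec] at hrow hcol
  have hc : c = c' := by
    simpa [dotProduct_add, hV.one_dotProduct_mulVec_one, hV'.one_dotProduct_mulVec_one, hn]
      using congrArg (1 ⬝ᵥ ·) hrow
  subst hc
  obtain rfl : V = V' :=
    hV.eq_of_line_sums_eq hn hV' (add_right_cancel hrow) (add_right_cancel hcol)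
  exact ⟨rfl, rfl, add_left_cancel (add_right_cancel h)⟩

theorem vecMulVec_add_add_smul_En_mul_self {N₀ : Matrix (Fin n) (Fin n) ℝ} {a b : Fin n → ℝ}
    (w : ℝ) (ha : 1 ⬝ᵥ a = 0) (hb : b ⬝ᵥ 1 = 0) (hrow : N₀ *ᵥ 1 = 0) (hcol : 1 ᵥ* N₀ = 0) :
    (vecMulVec a 1 + vecMulVec 1 b + N₀ + w • En n) *
        (vecMulVec a 1 + vecMulVec 1 b + N₀ + w • En n) =
      vecMulVec (N₀ *ᵥ a + ((n : ℝ) * w) • a) 1 + vecMulVec 1 (N₀ᵀ *ᵥ b + ((n : ℝ) * w) • b) +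
        (N₀ * N₀ + (n : ℝ) • vecMulVec a b) + (b ⬝ᵥ a + n * w ^ 2) • En n := by
  simp only [En_eq_vecMulVec_one, add_mul, mul_add, Matrix.smul_mul, Matrix.mul_smul,
    vecMulVec_mul_vecMulVec]
  simp only [mul_vecMulVec, vecMulVec_mul, hrow, hcol, ha, hb, one_dotProduct_one,
    Fintype.card_fin, vecMulVec_smul, smul_zero, vecMulVec_zero, zero_vecMulVec, add_vecMulVec,
    vecMulVec_add, smul_vecMulVec, mulVec_transpose, add_smul]
  module

end TypeDecomposition

/-- If `M = N²`, then in terms of the S+V decompositions of `M` and `N` (with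
`N_V = a 1ₙᵀ + 1ₙ bᵀ`):
(1) `wt M = bᵀ a + n (wt N)²`;
(2) `M_V = y 1ₙᵀ + 1ₙ zᵀ` with `y = N₀ a + n (wt N) a` and `z = N₀ᵀ b + n (wt N) b`;
(3) `M₀ = N₀² + n a bᵀ`. -/
theorem weights_of_square_factorisation {n : ℕ}
    (M N MV M0 N0 : Matrix (Fin n) (Fin n) ℝ) (a b : Fin n → ℝ)
    (ha : ∑ i, a i = 0) (hb : ∑ i, b i = 0)
    (hMV : IsTypeV MV) (hM0 : IsTypeS M0) (hM0w : wt M0 = 0)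
    (hMdec : M = MV + M0 + wt M • En n)
    (hN0 : IsTypeS N0) (hN0w : wt N0 = 0)
    (hNdec : N = vecMulVec a (fun _ => 1) + vecMulVec (fun _ => 1) b + N0 +
      wt N • En n)
    (hfact : M = N * N) :
    wt M = (∑ i, b i * a i) + n * wt N ^ 2 ∧
    (MV = vecMulVec (N0 *ᵥ a + ((n : ℝ) * wt N) • a) (fun _ => 1) +
          vecMulVec (fun _ => 1) (N0ᵀ *ᵥ b + ((n : ℝ) * wt N) • b)) ∧
    M0 = N0 * N0 + (n : ℝ) • vecMulVec a b := by
  rcases eq_or_ne n 0 with rfl | hn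
  · exact ⟨by simp [wt], Subsingleton.elim _ _, Subsingleton.elim _ _⟩
  rw [← one_dotProduct] at ha
  rw [← dotProduct_one] at hb
  obtain ⟨hN0row, hN0col⟩ := hN0.line_sums_eq_zero hN0w
  have hy : 1 ⬝ᵥ (N0 *ᵥ a + ((n : ℝ) * wt N) • a) = 0 := by
    rw [dotProduct_add, dotProduct_mulVec, hN0col, dotProduct_smul, ha, zero_dotProduct,
      smul_zero, add_zero]
  have hz : 1 ⬝ᵥ (N0ᵀ *ᵥ b + ((n : ℝ) * wt N) • b) = 0 := by
    rw [dotProduct_add, mulVec_transpose, dotProduct_comm, ← dotProduct_mulVec, hN0row,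
      dotProduct_smul, one_dotProduct, ← dotProduct_one, hb, dotProduct_zero, smul_zero, add_zero]
  have hP : (N0 * N0 + (n : ℝ) • vecMulVec a b) *ᵥ 1 = 0 ∧
      1 ᵥ* (N0 * N0 + (n : ℝ) • vecMulVec a b) = 0 := by
    simp only [add_mulVec, ← mulVec_mulVec, smul_mulVec, vecMulVec_mulVec, vecMul_add,
      ← vecMul_vecMul, vecMul_smul, vecMul_vecMulVec, hN0row, hN0col, ha, hb, mulVec_zero,
      zero_vecMul, MulOpposite.op_zero, zero_smul, smul_zero, add_zero, and_self]
  have hsq := vecMulVec_add_add_smul_En_mul_self (wt N) ha hb hN0row hN0col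
  have hM := hfact.trans ((congrArg (fun X => X * X) hNdec).trans hsq)
  exact typeV_add_add_smul_En_injective hn hMV (isTypeV_vecMulVec_add hy hz)
    (hM0.line_sums_eq_zero hM0w) hP (hMdec.symm.trans hM)
end

section
/- Let M be an n×n integer matrix and suppose M = N^T N for some n×n integer matrix N. Let N = a·1_n^T + 1_n·b^T + N_0 + (wt N)·E_n be the unique decomposition of N with a, b orthogonal to 1_n and N_0 ∈ S_n of weight 0. Then n²·(wt N) is an integer, each n²·a_j is an integer, and these integers satisfy the quadratic equation n⁴·(wt M) = n·(n²·wt N)² + Σ_{j=1}^n (n²·a_j)². -/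
/-!
The row sums of `N` carry all the information: since `b ⟂ 1ₙ` and `N₀` has zero row sums,
the `i`-th row sum of `N` is `n (aᵢ + wt N)`. Hence `n² wt N = ∑ᵢⱼ Nᵢⱼ` and
`n² aᵢ = n ∑ⱼ Nᵢⱼ - ∑ᵢⱼ Nᵢⱼ` are integers. The entries of `Nᵀ N` add up to the sum of the
squared row sums of `N`, and expanding `∑ᵢ (n² aᵢ + n² wt N)²` with `∑ᵢ aᵢ = 0` gives the identity.
-/

open Matrix Finset

theorem sq_mul_wt {n : ℕ} (M : Matrix (Fin n) (Fin n) ℝ) :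
    (n : ℝ) ^ 2 * wt M = ∑ i, ∑ j, M i j := by
  rcases eq_or_ne n 0 with rfl | hn
  · simp
  · rw [wt]
    field_simp

theorem IsTypeS.sum_row_eq {n : ℕ} {M : Matrix (Fin n) (Fin n) ℝ} (hM : IsTypeS M)
    (i : Fin n) : ∑ j, M i j = n * wt M := by
  obtain ⟨w, hrow, -⟩ := hM
  have hn : (n : ℝ) ≠ 0 := Nat.cast_ne_zero.mpr i.pos.ne'
  have hwt : wt M = w := by
    rw [wt, sum_congr rfl fun k _ => hrow k]
    simp only [sum_const, card_univ, Fintype.card_fin, nsmul_eq_mul]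
    field_simp
  rw [hrow, hwt]

theorem sum_row_eq_of_eq_decomposition {n : ℕ} {N N0 : Matrix (Fin n) (Fin n) ℝ}
    {a b : Fin n → ℝ} {c : ℝ} (hb : ∑ j, b j = 0) (hN0 : IsTypeS N0) (hN0w : wt N0 = 0)
    (hdec : N = vecMulVec a (fun _ => 1) + vecMulVec (fun _ => 1) b + N0 + c • En n)
    (i : Fin n) : ∑ j, N i j = n * (a i + c) := by
  subst hdec
  simp only [vecMulVec, En, of_add_of, smul_of, Matrix.add_apply, of_apply, Pi.add_apply,
    Pi.smul_apply, smul_eq_mul, mul_one, one_mul, sum_add_distrib, sum_const, card_univ,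
    Fintype.card_fin, nsmul_eq_mul, hb, hN0.sum_row_eq i, hN0w]
  ring

theorem Matrix.sum_sum_transpose_mul_self {R m k : Type*} [CommSemiring R] [Fintype m]
    [Fintype k] (N : Matrix k m R) :
    ∑ i, ∑ j, (Nᵀ * N) i j = ∑ l, (∑ j, N l j) ^ 2 := by
  simp only [mul_apply, transpose_apply, sq, sum_mul_sum]
  exact (sum_congr rfl fun _ _ => sum_comm).trans sum_comm

theorem Finset.sum_add_const_sq_of_sum_eq_zero {R ι : Type*} [CommRing R] (s : Finset ι)
    (x : ι → R) (c : R) (hx : ∑ i ∈ s, x i = 0) :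
    ∑ i ∈ s, (x i + c) ^ 2 = s.card * c ^ 2 + ∑ i ∈ s, x i ^ 2 := by
  have h : ∀ i, (x i + c) ^ 2 = x i ^ 2 + 2 * c * x i + c ^ 2 := fun i => by ring
  simp only [h, sum_add_distrib, ← mul_sum, hx, sum_const, nsmul_eq_mul]
  ring

/-- Quadratic form obstruction for `M = Nᵀ N` with integer matrices: `n² wt N` and the
`n² aⱼ` are integers satisfying `n⁴ wt M = n (n² wt N)² + ∑ⱼ (n² aⱼ)²`. -/
theorem quadratic_obstruction_transpose {n : ℕ}
    (M N : Matrix (Fin n) (Fin n) ℤ) (hfact : M = Nᵀ * N)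
    (a b : Fin n → ℝ) (N0 : Matrix (Fin n) (Fin n) ℝ)
    (ha : ∑ i, a i = 0) (hb : ∑ i, b i = 0)
    (hN0 : IsTypeS N0) (hN0w : wt N0 = 0)
    (hdec : N.map (Int.cast : ℤ → ℝ) =
      vecMulVec a (fun _ => 1) + vecMulVec (fun _ => 1) b + N0 +
        wt (N.map (Int.cast : ℤ → ℝ)) • En n) :
    (∃ z : ℤ, (n : ℝ) ^ 2 * wt (N.map (Int.cast : ℤ → ℝ)) = z) ∧
    (∀ j, ∃ z : ℤ, (n : ℝ) ^ 2 * a j = z) ∧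
    (n : ℝ) ^ 4 * wt (M.map (Int.cast : ℤ → ℝ)) =
      n * ((n : ℝ) ^ 2 * wt (N.map (Int.cast : ℤ → ℝ))) ^ 2 +
        ∑ j, ((n : ℝ) ^ 2 * a j) ^ 2 := by
  set R : Matrix (Fin n) (Fin n) ℝ := N.map Int.cast
  set w := wt R
  have hrow : ∀ i, ∑ j, R i j = n * (a i + w) := sum_row_eq_of_eq_decomposition hb hN0 hN0w hdec
  have hS : (n : ℝ) ^ 2 * w = ∑ i, ∑ j, (N i j : ℝ) := sq_mul_wt R
  refine ⟨⟨∑ i, ∑ j, N i j, by rw [hS]; push_cast; rfl⟩,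
    fun j => ⟨n * ∑ k, N j k - ∑ i, ∑ k, N i k, ?_⟩, ?_⟩
  · have hj : ∑ k, (N j k : ℝ) = n * (a j + w) := hrow j
    push_cast
    rw [hj, ← hS]
    ring
  have hM : M.map (Int.cast : ℤ → ℝ) = Rᵀ * R := by
    rw [hfact, ← transpose_map]
    exact Matrix.map_mul (f := Int.castRingHom ℝ)
  have ha' : ∑ j, (n : ℝ) ^ 2 * a j = 0 := by rw [← mul_sum, ha, mul_zero]
  calc (n : ℝ) ^ 4 * wt (M.map (Int.cast : ℤ → ℝ))
      = (n : ℝ) ^ 2 * ∑ l, (∑ j, R l j) ^ 2 := by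
        rw [hM, ← sum_sum_transpose_mul_self, ← sq_mul_wt]
        ring
    _ = ∑ l, ((n : ℝ) ^ 2 * a l + (n : ℝ) ^ 2 * w) ^ 2 := by
        rw [mul_sum]
        refine sum_congr rfl fun l _ => ?_
        rw [hrow]
        ring
    _ = n * ((n : ℝ) ^ 2 * w) ^ 2 + ∑ j, ((n : ℝ) ^ 2 * a j) ^ 2 := by
        rw [Finset.sum_add_const_sq_of_sum_eq_zero _ _ _ ha', card_univ, Fintype.card_fin]
end

section
/- For every natural number n with n ∉ {1, 3}, there exists an n×n Latin square L = (ℓ_{i,j}) such that ℓ_{1,1} = ℓ_{2,2} = 1 and ℓ_{1,2} = ℓ_{2,1} = 2. -/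
/-!
For even `n` the Cayley table of `Fin n` contains the intercalate spanned by `0` and the
involution `n / 2`. Groups of odd order have no involution, so for odd `n ≥ 5` the cyclic
square is modified in its first three rows: each column keeps its three symbols there,
which keeps the columns Latin, while the rows `0` and `1` now begin with `1 2 / 2 1`.
Permuting rows, columns and symbols then moves any intercalate into the corner.
-/

open Matrix Finset

/-- An `n × n` Latin square: a matrix with entries from `{1, …, n}` such that each
symbol appears exactly once in each row and exactly once in each column. -/
def IsLatinSquare {n : ℕ} (L : Fin n → Fin n → ℕ) : Prop :=
  (∀ i j, L i j ∈ Finset.Icc 1 n) ∧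
  (∀ i, Function.Injective (L i)) ∧
  (∀ j, Function.Injective fun i => L i j)

open Function

def IsLatin {R C S : Type*} (M : R → C → S) : Prop :=
  (∀ r, Injective (M r)) ∧ ∀ c, Injective fun r => M r c

def HasIntercalate {R C S : Type*} (M : R → C → S) : Prop :=
  ∃ r₀ r₁ c₀ c₁, r₀ ≠ r₁ ∧ c₀ ≠ c₁ ∧ M r₀ c₀ = M r₁ c₁ ∧ M r₀ c₁ = M r₁ c₀

theorem IsLatin.comp {R C S R' C' S' : Type*} {M : R → C → S} (hM : IsLatin M)
    {ρ : R' → R} {κ : C' → C} {σ : S → S'} (hρ : Injective ρ) (hκ : Injective κ)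
    (hσ : Injective σ) : IsLatin fun r c => σ (M (ρ r) (κ c)) :=
  ⟨fun r => hσ.comp ((hM.1 (ρ r)).comp hκ), fun c => hσ.comp ((hM.2 (κ c)).comp hρ)⟩

theorem isLatin_add (G : Type*) [AddGroup G] : IsLatin fun a b : G => a + b :=
  ⟨add_right_injective, add_left_injective⟩

theorem hasIntercalate_add {G : Type*} [AddGroup G] {a : G} (ha : a ≠ 0) (haa : a + a = 0) :
    HasIntercalate fun x y : G => x + y :=
  ⟨0, a, 0, a, ha.symm, ha.symm, by simp [haa], by simp⟩

theorem Equiv.exists_apply_eq_and_apply_eq {α β : Type*} [DecidableEq β] (e : α ≃ β)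
    {a b : α} (hab : a ≠ b) {x y : β} (hxy : x ≠ y) : ∃ f : α ≃ β, f a = x ∧ f b = y := by
  set e₁ := e.trans (Equiv.swap (e a) x)
  have h₁ : e₁ a = x := by simp [e₁]
  have hx : x ≠ e₁ b := h₁ ▸ e₁.injective.ne hab
  exact ⟨e₁.trans (Equiv.swap (e₁ b) y), by simp [h₁, Equiv.swap_apply_of_ne_of_ne hx hxy],
    by simp⟩

theorem IsLatinSquare.of_isLatin {n : ℕ} {M : Fin n → Fin n → Fin n} (hM : IsLatin M) :
    IsLatinSquare fun i j => (M i j : ℕ) + 1 :=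
  ⟨fun i j => Finset.mem_Icc.2 ⟨Nat.le_add_left 1 _, (M i j).isLt⟩,
    fun i _ _ h => hM.1 i (Fin.ext (by simpa using h)),
    fun j _ _ h => hM.2 j (Fin.ext (by simpa using h))⟩

theorem exists_latinSquare_of_hasIntercalate {R C S : Type*} [Fintype R] [Fintype C]
    [Fintype S] {n : ℕ} (hn : 1 < n) (hR : Fintype.card R = n) (hC : Fintype.card C = n)
    (hS : Fintype.card S = n) {M : R → C → S} (hM : IsLatin M) (hI : HasIntercalate M) :
    ∃ L : Fin n → Fin n → ℕ, IsLatinSquare L ∧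
      L ⟨0, by omega⟩ ⟨0, by omega⟩ = 1 ∧
      L ⟨1, by omega⟩ ⟨1, by omega⟩ = 1 ∧
      L ⟨0, by omega⟩ ⟨1, by omega⟩ = 2 ∧
      L ⟨1, by omega⟩ ⟨0, by omega⟩ = 2 := by
  classical
  obtain ⟨r₀, r₁, c₀, c₁, hr, hc, h₀, h₁⟩ := hI
  obtain ⟨ρ, hρ₀, hρ₁⟩ := (Fintype.equivFinOfCardEq hR).symm.exists_apply_eq_and_apply_eq
    (a := ⟨0, by omega⟩) (b := ⟨1, hn⟩) (by simp) hr
  obtain ⟨κ, hκ₀, hκ₁⟩ := (Fintype.equivFinOfCardEq hC).symm.exists_apply_eq_and_apply_eq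
    (a := ⟨0, by omega⟩) (b := ⟨1, hn⟩) (by simp) hc
  obtain ⟨σ, hσ₀, hσ₁⟩ := (Fintype.equivFinOfCardEq hS).exists_apply_eq_and_apply_eq
    ((hM.1 r₀).ne hc) (x := ⟨0, by omega⟩) (y := ⟨1, hn⟩) (by simp)
  refine ⟨_, .of_isLatin (hM.comp ρ.injective κ.injective σ.injective), ?_⟩
  simp [hρ₀, hρ₁, hκ₀, hκ₁, ← h₀, ← h₁, hσ₀, hσ₁]

theorem exists_isLatin_hasIntercalate_of_even {n : ℕ} (hn : 0 < n) (heven : Even n) :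
    ∃ M : Fin n → Fin n → Fin n, IsLatin M ∧ HasIntercalate M := by
  have : NeZero n := ⟨hn.ne'⟩
  obtain ⟨k, rfl⟩ := heven
  refine ⟨_, isLatin_add _, hasIntercalate_add (a := ⟨k, by omega⟩) ?_ ?_⟩
  · simp only [ne_eq, Fin.ext_iff, Fin.val_zero]
    omega
  · ext
    simp [Fin.val_add]

/-- For odd `n ≥ 5`: the cyclic square `(i + j) % n`, except that in column `j` the rows
`0, 1, 2` carry the symbols `j, j + 1, j + 2 (mod n)` in a different order. -/
def oddSquare (n : ℕ) : ℕ → ℕ → ℕ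
  | 0, j =>
    if j = 0 then 1 else if j = 1 then 2 else if j = n - 1 then 0
    else if j % 2 = 1 then j else j + 2
  | 1, j =>
    if j = 0 then 2 else if j = 1 then 1 else if j = 2 then 3 else if j = n - 2 then 0
    else if j = n - 1 then n - 1 else if j % 2 = 1 then j + 2 else j
  | 2, j =>
    if j = 0 then 0 else if j = 1 then 3 else if j = 2 then 2 else if j = n - 1 then 1 else j + 1
  | i + 3, j => (i + 3 + j) % n

theorem Nat.add_mod_eq_ite_of_lt {n a b : ℕ} (ha : a < n) (hb : b < n) :
    (a + b) % n = if n ≤ a + b then a + b - n else a + b := by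
  rw [Nat.add_mod_eq_ite, Nat.mod_eq_of_lt ha, Nat.mod_eq_of_lt hb]

section OddSquare

variable {n : ℕ} (h5 : 5 ≤ n) (hodd : n % 2 = 1)
include h5 hodd

theorem oddSquare_lt (i : ℕ) {j : ℕ} (hj : j < n) : oddSquare n i j < n := by
  rcases i with _ | _ | _ | i <;> simp only [oddSquare]
  · split_ifs <;> omega
  · split_ifs <;> omega
  · split_ifs <;> omega
  · exact Nat.mod_lt _ (by omega)

theorem oddSquare_injOn_row {i : ℕ} (hi : i < n) : Set.InjOn (oddSquare n i) (Set.Iio n) := by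
  intro j₁ hj₁ j₂ hj₂ h
  simp only [Set.mem_Iio] at hj₁ hj₂
  rcases i with _ | _ | _ | i <;> simp only [oddSquare] at h
  · split_ifs at h <;> omega
  · split_ifs at h <;> omega
  · split_ifs at h <;> omega
  · rw [Nat.add_mod_eq_ite_of_lt hi hj₁, Nat.add_mod_eq_ite_of_lt hi hj₂] at h
    split_ifs at h <;> omega

theorem oddSquare_injOn_col {j : ℕ} (hj : j < n) :
    Set.InjOn (fun i => oddSquare n i j) (Set.Iio n) := by
  intro i₁ hi₁ i₂ hi₂ h
  simp only [Set.mem_Iio] at hi₁ hi₂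
  rcases i₁ with _ | _ | _ | i₁ <;> rcases i₂ with _ | _ | _ | i₂ <;>
    simp only [oddSquare, Nat.add_mod_eq_ite_of_lt hi₁ hj, Nat.add_mod_eq_ite_of_lt hi₂ hj] at h <;>
    (try split_ifs at h) <;> omega

end OddSquare

theorem exists_isLatin_hasIntercalate_of_odd {n : ℕ} (h5 : 5 ≤ n) (hodd : Odd n) :
    ∃ M : Fin n → Fin n → Fin n, IsLatin M ∧ HasIntercalate M := by
  rw [Nat.odd_iff] at hodd
  refine ⟨fun i j => ⟨oddSquare n i j, oddSquare_lt h5 hodd i j.isLt⟩,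
    ⟨fun i j₁ j₂ h => Fin.ext ?_, fun j i₁ i₂ h => Fin.ext ?_⟩,
    ⟨0, by omega⟩, ⟨1, by omega⟩, ⟨0, by omega⟩, ⟨1, by omega⟩, by simp, by simp,
    Fin.ext ?_, Fin.ext ?_⟩
  · exact oddSquare_injOn_row h5 hodd i.isLt j₁.isLt j₂.isLt (Fin.val_eq_of_eq h)
  · exact oddSquare_injOn_col h5 hodd j.isLt i₁.isLt i₂.isLt (Fin.val_eq_of_eq h)
  · simp [oddSquare]
  · simp [oddSquare]

/-- For every `n ∈ ℕ \ {1, 3}` there is an `n × n` Latin square `L` with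
`ℓ₁₁ = ℓ₂₂ = 1` and `ℓ₁₂ = ℓ₂₁ = 2`. -/
theorem exists_latin_square_with_corner_block (n : ℕ)
    (hn0 : 0 < n) (hn1 : n ≠ 1) (hn3 : n ≠ 3) :
    ∃ L : Fin n → Fin n → ℕ, IsLatinSquare L ∧
      L ⟨0, by omega⟩ ⟨0, by omega⟩ = 1 ∧
      L ⟨1, by omega⟩ ⟨1, by omega⟩ = 1 ∧
      L ⟨0, by omega⟩ ⟨1, by omega⟩ = 2 ∧
      L ⟨1, by omega⟩ ⟨0, by omega⟩ = 2 := by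
  obtain ⟨M, hM, hI⟩ : ∃ M : Fin n → Fin n → Fin n, IsLatin M ∧ HasIntercalate M := by
    rcases Nat.even_or_odd n with heven | hodd
    · exact exists_isLatin_hasIntercalate_of_even hn0 heven
    · have h5 : 5 ≤ n := by obtain ⟨k, rfl⟩ := hodd; omega
      exact exists_isLatin_hasIntercalate_of_odd h5 hodd
  have hcard := Fintype.card_fin n
  exact exists_latinSquare_of_hasIntercalate (by omega) hcard hcard hcard hM hI
end
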